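/- Let p and l be distinct odd primes. The group Γ = ψ(Γ̃) is a CSA-group: every maximal abelian subgroup Γ₀ of Γ is malnormal, i.e. for every g ∈ Γ with g ∉ Γ₀ one has gΓ₀g⁻¹ ∩ Γ₀ = {1}. -/

import Mathlib

/-!
Every element of `Γ` is `ψ(x)` for an integer quaternion `x ≡ 1` or `1 + j + k` modulo `2`, in
particular with odd real part. For such quaternions `ψ(x)` and `ψ(y)` commute exactly when `x`
and `y` do. Commuting quaternions have parallel imaginary parts, so commutation is transitive
through non-real elements, i.e. `Γ` is commutative transitive. Moreover, if `w z w*` commutes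
with `z` then `w` commutes with `z`, because `Re w ≠ 0`. Now if `t = g s g⁻¹ ≠ 1` with
`s, t ∈ Γ₀`, then `s` and `t` commute, so `g` commutes with `t`, hence with all of `Γ₀`, and
maximality of `Γ₀` puts `g` in `Γ₀`.
-/

open Quaternion Matrix
open scoped Classical

noncomputable section

/-- The set `Γ̃` of integer quaternions with norm `p^r l^s` and the appropriate
parity conditions. -/
def GammaTilde (p l : ℕ) : Set ℍ[ℤ] :=
  {x | (∃ r s : ℕ, Quaternion.normSq x = (p : ℤ) ^ r * (l : ℤ) ^ s) ∧
       (Quaternion.normSq x % 4 = 1 →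
          Odd x.re ∧ Even x.imI ∧ Even x.imJ ∧ Even x.imK) ∧
       (Quaternion.normSq x % 4 = 3 →
          Even x.imI ∧ Odd x.re ∧ Odd x.imJ ∧ Odd x.imK)}

/-- The set `Ã ⊆ Γ̃` of elements of positive real part and norm `p`. -/
def Atilde (p l : ℕ) : Set ℍ[ℤ] :=
  {x | x ∈ GammaTilde p l ∧ 0 < x.re ∧ Quaternion.normSq x = (p : ℤ)}

/-- The set `B̃ ⊆ Γ̃` of elements of positive real part and norm `l`. -/
def Btilde (p l : ℕ) : Set ℍ[ℤ] :=
  {y | y ∈ GammaTilde p l ∧ 0 < y.re ∧ Quaternion.normSq y = (l : ℤ)}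

/-- The projective general linear group `PGL₂(K)`: `GL₂(K)` modulo its center. -/
abbrev PGL2 (K : Type*) [Field K] : Type _ :=
  GL (Fin 2) K ⧸ Subgroup.center (GL (Fin 2) K)

/-- The matrix `M_{c,d}(x)` associated to an integer quaternion `x`. -/
def Mcd {K : Type*} [Field K] (c d : K) (x : ℍ[ℤ]) : Matrix (Fin 2) (Fin 2) K :=
  !![(x.re : K) + (x.imI : K) * c + (x.imK : K) * d,
     -(x.imI : K) * d + (x.imJ : K) + (x.imK : K) * c;
     -(x.imI : K) * d - (x.imJ : K) + (x.imK : K) * c,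
     (x.re : K) - (x.imI : K) * c - (x.imK : K) * d]

lemma det_Mcd {K : Type*} [Field K] {c d : K} (hcd : c ^ 2 + d ^ 2 + 1 = 0)
    (x : ℍ[ℤ]) : (Mcd c d x).det = ((Quaternion.normSq x : ℤ) : K) := by
  rw [Quaternion.normSq_def']
  rw [Mcd, Matrix.det_fin_two_of]
  push_cast
  linear_combination (-(x.imI : K) ^ 2 - (x.imK : K) ^ 2) * hcd

lemma det_Mcd_ne_zero {K : Type*} [Field K] [CharZero K] {c d : K}
    (hcd : c ^ 2 + d ^ 2 + 1 = 0) {x : ℍ[ℤ]} (hx : x ≠ 0) :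
    (Mcd c d x).det ≠ 0 := by
  rw [det_Mcd hcd]
  exact_mod_cast Quaternion.normSq_ne_zero.mpr hx

/-- The image of a nonzero integer quaternion in `GL₂(K)` (junk value `1` at `x = 0`). -/
def psiGL {K : Type*} [Field K] [CharZero K] (c d : K) (hcd : c ^ 2 + d ^ 2 + 1 = 0)
    (x : ℍ[ℤ]) : GL (Fin 2) K :=
  if hx : x = 0 then 1
  else Matrix.GeneralLinearGroup.mkOfDetNeZero (Mcd c d x) (det_Mcd_ne_zero hcd hx)

variable (p l : ℕ) [Fact p.Prime] [Fact l.Prime]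

/-- The map `ψ : ℍ(ℤ) → PGL₂(ℚ_p) × PGL₂(ℚ_l)` (with junk value at `0`). -/
def psi (cp dp : ℚ_[p]) (cl dl : ℚ_[l])
    (hp : cp ^ 2 + dp ^ 2 + 1 = 0) (hl : cl ^ 2 + dl ^ 2 + 1 = 0)
    (x : ℍ[ℤ]) : PGL2 ℚ_[p] × PGL2 ℚ_[l] :=
  (QuotientGroup.mk (psiGL cp dp hp x), QuotientGroup.mk (psiGL cl dl hl x))

/-- The group `Γ = ψ(Γ̃)`, as the subgroup of `PGL₂(ℚ_p) × PGL₂(ℚ_l)` generated by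
the image `ψ(Γ̃)` (this image is itself closed under multiplication and inverses,
so it coincides with the generated subgroup). -/
def Gamma (cp dp : ℚ_[p]) (cl dl : ℚ_[l])
    (hp : cp ^ 2 + dp ^ 2 + 1 = 0) (hl : cl ^ 2 + dl ^ 2 + 1 = 0) :
    Subgroup (PGL2 ℚ_[p] × PGL2 ℚ_[l]) :=
  Subgroup.closure (psi p l cp dp cl dl hp hl '' GammaTilde p l)

/-- The subgroup `Γ_p = ⟨ψ(Ã)⟩`. -/
def GammaP (cp dp : ℚ_[p]) (cl dl : ℚ_[l])
    (hp : cp ^ 2 + dp ^ 2 + 1 = 0) (hl : cl ^ 2 + dl ^ 2 + 1 = 0) :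
    Subgroup (PGL2 ℚ_[p] × PGL2 ℚ_[l]) :=
  Subgroup.closure (psi p l cp dp cl dl hp hl '' Atilde p l)

/-- The subgroup `Γ_l = ⟨ψ(B̃)⟩`. -/
def GammaL (cp dp : ℚ_[p]) (cl dl : ℚ_[l])
    (hp : cp ^ 2 + dp ^ 2 + 1 = 0) (hl : cl ^ 2 + dl ^ 2 + 1 = 0) :
    Subgroup (PGL2 ℚ_[p] × PGL2 ℚ_[l]) :=
  Subgroup.closure (psi p l cp dp cl dl hp hl '' Btilde p l)

/-- `Γ₀` is a maximal abelian subgroup of `Γ`: it is an abelian subgroup contained in `Γ`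
which is maximal among abelian subgroups of `Γ` ordered by inclusion. -/
def IsMaxAbelian {G : Type*} [Group G] (Γ Γ₀ : Subgroup G) : Prop :=
  Γ₀ ≤ Γ ∧ (∀ a ∈ Γ₀, ∀ b ∈ Γ₀, a * b = b * a) ∧
    ∀ H : Subgroup G, H ≤ Γ → (∀ a ∈ H, ∀ b ∈ H, a * b = b * a) → Γ₀ ≤ H → H = Γ₀

section CSA

variable {G : Type*} [Group G]

lemma Subgroup.commute_of_mem_closure {S : Set G} (hS : ∀ a ∈ S, ∀ b ∈ S, Commute a b)
    {a b : G} (ha : a ∈ Subgroup.closure S) (hb : b ∈ Subgroup.closure S) : Commute a b :=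
  Set.centralizer_centralizer_comm_of_comm hS _
    (Subgroup.closure_le_centralizer_centralizer S ha) _
    (Subgroup.closure_le_centralizer_centralizer S hb)

lemma IsMaxAbelian.mem_of_forall_commute {Γ Γ₀ : Subgroup G} (hmax : IsMaxAbelian Γ Γ₀)
    {g : G} (hg : g ∈ Γ) (hcomm : ∀ a ∈ Γ₀, Commute g a) : g ∈ Γ₀ := by
  obtain ⟨hle, habel, hmaximal⟩ := hmax
  have hclosure : Subgroup.closure (insert g Γ₀) = Γ₀ := by
    refine hmaximal _ ?_ (fun x hx y hy ↦ Subgroup.commute_of_mem_closure ?_ hx hy) ?_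
    · exact Subgroup.closure_le _ |>.mpr (Set.insert_subset hg hle)
    · rintro a (ha | ha) b (hb | hb)
      · exact ha ▸ hb ▸ Commute.refl g
      · exact ha ▸ hcomm b hb
      · exact hb ▸ (hcomm a ha).symm
      · exact habel a ha b hb
    · exact fun a ha ↦ Subgroup.subset_closure (Set.mem_insert_of_mem g ha)
  exact hclosure ▸ Subgroup.subset_closure (Set.mem_insert g _)

def Subgroup.IsCommTransitive (Γ : Subgroup G) : Prop :=
  ∀ a ∈ Γ, ∀ b ∈ Γ, ∀ m ∈ Γ, m ≠ 1 → Commute a m → Commute m b → Commute a b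

theorem IsMaxAbelian.map_conj_inf_eq_bot {Γ Γ₀ : Subgroup G} (hmax : IsMaxAbelian Γ Γ₀)
    (hCT : Γ.IsCommTransitive)
    (hconj : ∀ g ∈ Γ, ∀ t ∈ Γ, Commute (g * t * g⁻¹) t → Commute g t)
    {g : G} (hg : g ∈ Γ) (hgn : g ∉ Γ₀) :
    Subgroup.map (MulAut.conj g).toMonoidHom Γ₀ ⊓ Γ₀ = ⊥ := by
  refine (Subgroup.eq_bot_iff_forall _).mpr fun t ht ↦ by_contra fun ht₁ ↦ hgn ?_
  obtain ⟨⟨s, hs, rfl⟩, ht⟩ := Subgroup.mem_inf.mp ht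
  simp only [MulEquiv.toMonoidHom_eq_coe, MonoidHom.coe_coe, MulAut.conj_apply] at ht ht₁ ⊢
  have hgt : Commute g (g * s * g⁻¹) := by
    refine Commute.inv_left_iff.mp (hconj g⁻¹ (inv_mem hg) _ (hmax.1 ht) ?_)
    rw [show g⁻¹ * (g * s * g⁻¹) * g⁻¹⁻¹ = s by group]
    exact hmax.2.1 s hs _ ht
  exact hmax.mem_of_forall_commute hg fun a ha ↦
    hCT g hg a (hmax.1 ha) _ (hmax.1 ht) ht₁ hgt (hmax.2.1 _ ht a ha)

end CSA

namespace Quaternion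

variable {R : Type*} [CommRing R] [LinearOrder R] [IsStrictOrderedRing R] {x y z w : ℍ[R]}

lemma commute_iff_cross_im :
    Commute x y ↔ x.imJ * y.imK = x.imK * y.imJ ∧ x.imK * y.imI = x.imI * y.imK ∧
      x.imI * y.imJ = x.imJ * y.imI := by
  refine ⟨fun h ↦ ?_, fun ⟨h₁, h₂, h₃⟩ ↦ ?_⟩
  · have hI := congrArg QuaternionAlgebra.imI h.eq
    have hJ := congrArg QuaternionAlgebra.imJ h.eq
    have hK := congrArg QuaternionAlgebra.imK h.eq
    simp only [imI_mul, imJ_mul, imK_mul] at hI hJ hK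
    refine ⟨?_, ?_, ?_⟩ <;> linarith
  · ext <;> simp only [re_mul, imI_mul, imJ_mul, imK_mul] <;> linarith

lemma eq_zero_of_mul_eq_neg_mul (hx : x.re ≠ 0) (h : x * y = -(y * x)) : y = 0 := by
  have e0 := congrArg QuaternionAlgebra.re h
  have e1 := congrArg QuaternionAlgebra.imI h
  have e2 := congrArg QuaternionAlgebra.imJ h
  have e3 := congrArg QuaternionAlgebra.imK h
  simp only [re_mul, imI_mul, imJ_mul, imK_mul, re_neg, imI_neg, imJ_neg, imK_neg] at e0 e1 e2 e3
  have hx₀ : x ≠ 0 := fun h ↦ hx (by simp [h])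
  have hre : y.re = 0 := by
    have : 2 * (y.re * normSq x) = 0 := by
      rw [normSq_def']
      linear_combination x.re * e0 + x.imI * e1 + x.imJ * e2 + x.imK * e3
    simpa [hx₀] using this
  ext
  · exact hre
  · have : 2 * (x.re * y.imI) = 0 := by linear_combination e1 - 2 * x.imI * hre
    simpa [hx] using this
  · have : 2 * (x.re * y.imJ) = 0 := by linear_combination e2 - 2 * x.imJ * hre
    simpa [hx] using this
  · have : 2 * (x.re * y.imK) = 0 := by linear_combination e3 - 2 * x.imK * hre
    simpa [hx] using this

/-- With `'` denoting imaginary parts, `|y'|² (x' × z')` is a combination of `x' × y'` and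
`y' × z'`. -/
lemma commute_trans_of_im_ne_zero (hy : y.im ≠ 0) (hxy : Commute x y) (hyz : Commute y z) :
    Commute x z := by
  have hS : y.imI ^ 2 + y.imJ ^ 2 + y.imK ^ 2 ≠ 0 := by
    simpa [normSq_def'] using normSq_ne_zero.mpr hy
  rw [commute_iff_cross_im] at hxy hyz ⊢
  obtain ⟨h₁, h₂, h₃⟩ := hxy
  obtain ⟨k₁, k₂, k₃⟩ := hyz
  set dot := y.imI * x.imI + y.imJ * x.imJ + y.imK * x.imK
  refine ⟨?_, ?_, ?_⟩ <;> refine mul_left_cancel₀ hS ?_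
  · linear_combination (-y.imI * z.imK) * h₃ + dot * k₁ + (-y.imI * z.imJ) * h₂
      + (y.imJ * z.imJ + y.imK * z.imK) * h₁
  · linear_combination (-y.imJ * z.imI) * h₁ + dot * k₂ + (-y.imJ * z.imK) * h₃
      + (y.imK * z.imK + y.imI * z.imI) * h₂
  · linear_combination (-y.imK * z.imJ) * h₂ + dot * k₃ + (-y.imK * z.imI) * h₁
      + (y.imI * z.imI + y.imJ * z.imJ) * h₃

/-- Writing `w = a + v` and `z'` for the imaginary part of `z`, the imaginary part of `w z w*`
is `w z' w*`; dotting its cross product with `z'` against `v` gives `-2 a |v × z'|²`,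
and `|wz - zw|² = 4 |v × z'|²`. -/
lemma commute_of_commute_mul_mul_star (hw : w.re ≠ 0) (h : Commute (w * z * star w) z) :
    Commute w z := by
  obtain ⟨h₁, h₂, h₃⟩ := commute_iff_cross_im.mp h
  simp only [re_mul, imI_mul, imJ_mul, imK_mul, re_star, imI_star, imJ_star, imK_star]
    at h₁ h₂ h₃
  have key : w.re * normSq (w * z - z * w) = 0 := by
    simp only [normSq_def', re_sub, imI_sub, imJ_sub, imK_sub, re_mul, imI_mul, imJ_mul, imK_mul]
    linear_combination (-2 * w.imI) * h₁ + (-2 * w.imJ) * h₂ + (-2 * w.imK) * h₃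
  simpa [hw, sub_eq_zero, commute_iff_eq] using key

end Quaternion

lemma Matrix.GeneralLinearGroup.exists_smul_of_commute_mk {n R : Type*} [Fintype n]
    [DecidableEq n] [CommRing R] {a b : GL n R}
    (h : Commute (QuotientGroup.mk a : GL n R ⧸ Subgroup.center (GL n R)) (QuotientGroup.mk b)) :
    ∃ μ : R, ((b * a : GL n R) : Matrix n n R) = μ • ((a * b : GL n R) : Matrix n n R) := by
  obtain ⟨μ, hμ⟩ := mem_center_iff_val_mem_range_scalar.mp (QuotientGroup.eq.mp h.eq)
  refine ⟨μ, ?_⟩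
  rw [← mul_inv_cancel_left (a * b) (b * a), Units.val_mul _ ((a * b)⁻¹ * (b * a)), ← hμ,
    Matrix.scalar_apply, ← Matrix.smul_one_eq_diagonal, Matrix.mul_smul, Matrix.mul_one]

section Mcd

variable {K : Type*} [Field K] {c d : K}

lemma Mcd_one : Mcd c d 1 = 1 := by
  ext i j
  fin_cases i <;> fin_cases j <;> simp [Mcd]

lemma Mcd_of_im_eq_zero {x : ℍ[ℤ]} (hx : x.im = 0) : Mcd c d x = (x.re : K) • 1 := by
  obtain ⟨hI, hJ, hK⟩ : x.imI = 0 ∧ x.imJ = 0 ∧ x.imK = 0 := by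
    simpa using congrArg (fun q : ℍ[ℤ] ↦ (q.imI, q.imJ, q.imK)) hx
  ext i j
  fin_cases i <;> fin_cases j <;> simp [Mcd, hI, hJ, hK]

lemma Mcd_neg (x : ℍ[ℤ]) : Mcd c d (-x) = -Mcd c d x := by
  ext i j
  fin_cases i <;> fin_cases j <;>
    simp only [Mcd, Matrix.neg_apply, Matrix.of_apply, Matrix.cons_val', Matrix.cons_val_zero,
      Matrix.cons_val_one, Matrix.cons_val_fin_one, Fin.zero_eta, Fin.mk_one, re_neg, imI_neg,
      imJ_neg, imK_neg, Int.cast_neg] <;> ring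

lemma Mcd_mul (hcd : c ^ 2 + d ^ 2 + 1 = 0) (x y : ℍ[ℤ]) :
    Mcd c d (x * y) = Mcd c d x * Mcd c d y := by
  ext i j
  fin_cases i <;> fin_cases j <;>
    simp only [Mcd, Matrix.mul_apply, Fin.sum_univ_two, Matrix.of_apply, Matrix.cons_val',
      Matrix.cons_val_zero, Matrix.cons_val_one, Matrix.cons_val_fin_one, Fin.zero_eta, Fin.mk_one,
      re_mul, imI_mul, imJ_mul, imK_mul] <;> push_cast
  · linear_combination (-((x.imI : K) * y.imI + (x.imK : K) * y.imK)) * hcd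
  · linear_combination ((x.imK : K) * y.imI - (x.imI : K) * y.imK) * hcd
  · linear_combination ((x.imI : K) * y.imK - (x.imK : K) * y.imI) * hcd
  · linear_combination (-((x.imI : K) * y.imI + (x.imK : K) * y.imK)) * hcd

lemma Mcd_injective [CharZero K] (hcd : c ^ 2 + d ^ 2 + 1 = 0) :
    Function.Injective (Mcd c d) := by
  intro x y h
  have h₀₀ := congrFun₂ h 0 0
  have h₀₁ := congrFun₂ h 0 1
  have h₁₀ := congrFun₂ h 1 0
  have h₁₁ := congrFun₂ h 1 1
  simp only [Mcd, Matrix.of_apply, Matrix.cons_val', Matrix.cons_val_zero, Matrix.cons_val_one,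
    Matrix.empty_val', Matrix.cons_val_fin_one]
    at h₀₀ h₀₁ h₁₀ h₁₁
  -- `x₀` and `x₂` come from the trace and the skew part; `x₁` and `x₃` solve a linear system of
  -- determinant `c² + d² = -1`.
  ext
  · exact_mod_cast (by linear_combination (h₀₀ + h₁₁) / 2 : (x.re : K) = y.re)
  · exact_mod_cast (by
      linear_combination (-c / 2) * h₀₀ + (c / 2) * h₁₁ + (d / 2) * h₀₁ + (d / 2) * h₁₀
        + ((x.imI : K) - y.imI) * hcd : (x.imI : K) = y.imI)
  · exact_mod_cast (by linear_combination (h₀₁ - h₁₀) / 2 : (x.imJ : K) = y.imJ)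
  · exact_mod_cast (by
      linear_combination (-d / 2) * h₀₀ + (d / 2) * h₁₁ + (-c / 2) * h₀₁ + (-c / 2) * h₁₀
        + ((x.imK : K) - y.imK) * hcd : (x.imK : K) = y.imK)

end Mcd

section psiGL

variable {K : Type*} [Field K] [CharZero K] {c d : K} (hcd : c ^ 2 + d ^ 2 + 1 = 0)

lemma val_psiGL {x : ℍ[ℤ]} (hx : x ≠ 0) :
    (psiGL c d hcd x : Matrix (Fin 2) (Fin 2) K) = Mcd c d x := by
  rw [psiGL, dif_neg hx]
  rfl

lemma psiGL_one : psiGL c d hcd 1 = 1 :=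
  Units.ext <| (val_psiGL hcd one_ne_zero).trans Mcd_one

lemma psiGL_mul {x y : ℍ[ℤ]} (hx : x ≠ 0) (hy : y ≠ 0) :
    psiGL c d hcd (x * y) = psiGL c d hcd x * psiGL c d hcd y :=
  Units.ext <| by
    rw [Units.val_mul, val_psiGL hcd (mul_ne_zero hx hy), val_psiGL hcd hx, val_psiGL hcd hy,
      Mcd_mul hcd]

lemma mk_psiGL_of_im_eq_zero {x : ℍ[ℤ]} (hx : x ≠ 0) (him : x.im = 0) :
    (QuotientGroup.mk (psiGL c d hcd x) : PGL2 K) = 1 := by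
  rw [QuotientGroup.eq_one_iff, Matrix.GeneralLinearGroup.mem_center_iff_val_mem_range_scalar,
    val_psiGL hcd hx, Mcd_of_im_eq_zero him]
  exact ⟨x.re, by rw [Matrix.scalar_apply, Matrix.smul_one_eq_diagonal]⟩

/-- Commuting in `PGL₂` means `M(y) M(x) = μ M(x) M(y)`; taking determinants gives `μ = ±1`,
and `μ = -1` would make `x` and `y` anticommute. -/
lemma commute_of_commute_mk_psiGL {x y : ℍ[ℤ]} (hx : x ≠ 0) (hy : y.re ≠ 0)
    (h : Commute (QuotientGroup.mk (psiGL c d hcd x) : PGL2 K)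
      (QuotientGroup.mk (psiGL c d hcd y))) :
    Commute x y := by
  have hy₀ : y ≠ 0 := fun h ↦ hy (by simp [h])
  obtain ⟨μ, hμ⟩ := Matrix.GeneralLinearGroup.exists_smul_of_commute_mk h
  rw [← psiGL_mul hcd hy₀ hx, ← psiGL_mul hcd hx hy₀, val_psiGL hcd (mul_ne_zero hy₀ hx),
    val_psiGL hcd (mul_ne_zero hx hy₀)] at hμ
  have hN : ((Quaternion.normSq (x * y) : ℤ) : K) ≠ 0 := by
    exact_mod_cast Quaternion.normSq_ne_zero.mpr (mul_ne_zero hx hy₀)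
  have hμ₂ : μ ^ 2 = 1 := by
    have := congrArg Matrix.det hμ
    rw [Matrix.det_smul, det_Mcd hcd, det_Mcd hcd, Fintype.card_fin, map_mul, mul_comm,
      ← map_mul] at this
    exact (mul_eq_right₀ hN).mp this.symm
  rcases sq_eq_one_iff.mp hμ₂ with rfl | rfl
  · exact (Mcd_injective hcd (by rw [hμ, one_smul])).symm
  · have : y * x = -(x * y) := Mcd_injective hcd (by rw [hμ, Mcd_neg, neg_one_smul])
    exact absurd (Quaternion.eq_zero_of_mul_eq_neg_mul hy this) hx

end psiGL

/-- Integer quaternions congruent to `1` or `1 + j + k` modulo `2`: the parity patterns of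
`Γ̃`. -/
def parityMonoid : Submonoid ℍ[ℤ] where
  carrier := {x | Odd x.re ∧ Even x.imI ∧ (Even x.imJ ↔ Even x.imK)}
  one_mem' := by simp
  mul_mem' := by
    rintro x y ⟨hx₀, hx₁, hx₂₃⟩ ⟨hy₀, hy₁, hy₂₃⟩
    simp only [← Int.not_even_iff_odd] at hx₀ hy₀ ⊢
    simp only [Set.mem_ofPred_eq, Quaternion.re_mul, Quaternion.imI_mul, Quaternion.imJ_mul,
      Quaternion.imK_mul, parity_simps]
    simp only [hx₀, hy₀, hx₁, hy₁, hx₂₃, hy₂₃, true_or, or_true, false_or, or_false, iff_true,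
      true_iff]
    tauto

lemma mem_parityMonoid {x : ℍ[ℤ]} :
    x ∈ parityMonoid ↔ Odd x.re ∧ Even x.imI ∧ (Even x.imJ ↔ Even x.imK) := Iff.rfl

lemma star_mem_parityMonoid {x : ℍ[ℤ]} (hx : x ∈ parityMonoid) : star x ∈ parityMonoid := by
  simpa [mem_parityMonoid] using hx

lemma re_ne_zero_of_mem_parityMonoid {x : ℍ[ℤ]} (hx : x ∈ parityMonoid) : x.re ≠ 0 :=
  fun h ↦ by simpa [h] using hx.1

lemma gammaTilde_subset_parityMonoid {p l : ℕ} (hp : Odd p) (hl : Odd l) :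
    GammaTilde p l ⊆ parityMonoid := by
  rintro x ⟨⟨r, s, hrs⟩, h₁, h₃⟩
  have hodd : Odd (Quaternion.normSq x) := hrs ▸ hp.natCast.pow.mul hl.natCast.pow
  have : Quaternion.normSq x % 4 = 1 ∨ Quaternion.normSq x % 4 = 3 := by
    have := Int.odd_iff.mp hodd
    omega
  rcases this with h | h
  · obtain ⟨hre, hI, hJ, hK⟩ := h₁ h
    exact ⟨hre, hI, iff_of_true hJ hK⟩
  · obtain ⟨hI, hre, hJ, hK⟩ := h₃ h
    exact ⟨hre, hI, iff_of_false (Int.not_even_iff_odd.mpr hJ) (Int.not_even_iff_odd.mpr hK)⟩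

lemma ne_zero_of_mem_parityMonoid {x : ℍ[ℤ]} (hx : x ∈ parityMonoid) : x ≠ 0 :=
  fun h ↦ re_ne_zero_of_mem_parityMonoid hx (by simp [h])

section Psi

variable {p l} {cp dp : ℚ_[p]} {cl dl : ℚ_[l]} {hcp : cp ^ 2 + dp ^ 2 + 1 = 0}
  {hcl : cl ^ 2 + dl ^ 2 + 1 = 0}

local notation "ψ" => psi p l cp dp cl dl hcp hcl

lemma psi_one : ψ 1 = 1 := by
  simp [psi, psiGL_one]

lemma psi_mul {x y : ℍ[ℤ]} (hx : x ≠ 0) (hy : y ≠ 0) : ψ (x * y) = ψ x * ψ y := by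
  simp [psi, psiGL_mul _ hx hy]

lemma psi_of_im_eq_zero {x : ℍ[ℤ]} (hx : x ≠ 0) (him : x.im = 0) : ψ x = 1 := by
  simp [psi, mk_psiGL_of_im_eq_zero _ hx him]

lemma psi_star {x : ℍ[ℤ]} (hx : x ≠ 0) : ψ (star x) = (ψ x)⁻¹ := by
  refine eq_inv_of_mul_eq_one_right ?_
  rw [← psi_mul hx (star_ne_zero.mpr hx)]
  exact psi_of_im_eq_zero (mul_ne_zero hx (star_ne_zero.mpr hx))
    (by rw [Quaternion.self_mul_star, Quaternion.im_coe])

lemma Commute.psi {x y : ℍ[ℤ]} (hx : x ≠ 0) (hy : y ≠ 0) (h : Commute x y) :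
    Commute (ψ x) (ψ y) := by
  rw [Commute, SemiconjBy, ← psi_mul hx hy, ← psi_mul hy hx, h.eq]

lemma commute_of_commute_psi {x y : ℍ[ℤ]} (hx : x ≠ 0) (hy : y.re ≠ 0)
    (h : Commute (ψ x) (ψ y)) : Commute x y :=
  commute_of_commute_mk_psiGL hcp hx hy (h.map (MonoidHom.fst _ _))

lemma exists_psi_eq_of_mem_Gamma (hpo : Odd p) (hlo : Odd l) {γ : PGL2 ℚ_[p] × PGL2 ℚ_[l]}
    (hγ : γ ∈ Gamma p l cp dp cl dl hcp hcl) : ∃ x ∈ parityMonoid, ψ x = γ := by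
  induction hγ using Subgroup.closure_induction with
  | mem _ h =>
    obtain ⟨x, hx, rfl⟩ := h
    exact ⟨x, gammaTilde_subset_parityMonoid hpo hlo hx, rfl⟩
  | one => exact ⟨1, one_mem _, psi_one⟩
  | mul _ _ _ _ ihx ihy =>
    obtain ⟨x, hx, rfl⟩ := ihx
    obtain ⟨y, hy, rfl⟩ := ihy
    exact ⟨x * y, mul_mem hx hy,
      psi_mul (ne_zero_of_mem_parityMonoid hx) (ne_zero_of_mem_parityMonoid hy)⟩
  | inv _ _ ih =>
    obtain ⟨x, hx, rfl⟩ := ih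
    exact ⟨star x, star_mem_parityMonoid hx, psi_star (ne_zero_of_mem_parityMonoid hx)⟩

lemma Gamma_isCommTransitive (hpo : Odd p) (hlo : Odd l) :
    (Gamma p l cp dp cl dl hcp hcl).IsCommTransitive := by
  intro a ha b hb m hm hm₁ ham hmb
  obtain ⟨x, hx, rfl⟩ := exists_psi_eq_of_mem_Gamma hpo hlo ha
  obtain ⟨y, hy, rfl⟩ := exists_psi_eq_of_mem_Gamma hpo hlo hb
  obtain ⟨z, hz, rfl⟩ := exists_psi_eq_of_mem_Gamma hpo hlo hm
  have hx₀ := ne_zero_of_mem_parityMonoid hx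
  have hy₀ := ne_zero_of_mem_parityMonoid hy
  have hz₀ := ne_zero_of_mem_parityMonoid hz
  have hxz := commute_of_commute_psi hx₀ (re_ne_zero_of_mem_parityMonoid hz) ham
  have hzy := commute_of_commute_psi hz₀ (re_ne_zero_of_mem_parityMonoid hy) hmb
  have hz_im : z.im ≠ 0 := fun him ↦ hm₁ (psi_of_im_eq_zero hz₀ him)
  exact (Quaternion.commute_trans_of_im_ne_zero hz_im hxz hzy).psi hx₀ hy₀

lemma Gamma_commute_of_commute_conj (hpo : Odd p) (hlo : Odd l) {g t : PGL2 ℚ_[p] × PGL2 ℚ_[l]}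
    (hg : g ∈ Gamma p l cp dp cl dl hcp hcl) (ht : t ∈ Gamma p l cp dp cl dl hcp hcl)
    (h : Commute (g * t * g⁻¹) t) : Commute g t := by
  obtain ⟨w, hw, rfl⟩ := exists_psi_eq_of_mem_Gamma hpo hlo hg
  obtain ⟨z, hz, rfl⟩ := exists_psi_eq_of_mem_Gamma hpo hlo ht
  have hw₀ := ne_zero_of_mem_parityMonoid hw
  have hz₀ := ne_zero_of_mem_parityMonoid hz
  have hconj₀ : w * z * star w ≠ 0 := mul_ne_zero (mul_ne_zero hw₀ hz₀) (star_ne_zero.mpr hw₀)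
  rw [← psi_star hw₀, ← psi_mul hw₀ hz₀, ← psi_mul (mul_ne_zero hw₀ hz₀) (star_ne_zero.mpr hw₀)]
    at h
  exact (Quaternion.commute_of_commute_mul_mul_star (re_ne_zero_of_mem_parityMonoid hw)
    (commute_of_commute_psi hconj₀ (re_ne_zero_of_mem_parityMonoid hz) h)).psi hw₀ hz₀

end Psi

theorem gamma_CSA_general (p l : ℕ) [Fact p.Prime] [Fact l.Prime]
    (hp2 : p ≠ 2) (hl2 : l ≠ 2)
    (cp dp : ℚ_[p]) (cl dl : ℚ_[l])
    (hcp : cp ^ 2 + dp ^ 2 + 1 = 0) (hcl : cl ^ 2 + dl ^ 2 + 1 = 0)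
    (Γ₀ : Subgroup (PGL2 ℚ_[p] × PGL2 ℚ_[l]))
    (hmax : IsMaxAbelian (Gamma p l cp dp cl dl hcp hcl) Γ₀)
    (g : PGL2 ℚ_[p] × PGL2 ℚ_[l]) (hg : g ∈ Gamma p l cp dp cl dl hcp hcl) (hgn : g ∉ Γ₀) :
    Subgroup.map (MulAut.conj g).toMonoidHom Γ₀ ⊓ Γ₀ = ⊥ := by
  have hpo : Odd p := Nat.Prime.odd_of_ne_two Fact.out hp2
  have hlo : Odd l := Nat.Prime.odd_of_ne_two Fact.out hl2
  exact hmax.map_conj_inf_eq_bot (Gamma_isCommTransitive hpo hlo)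
    (fun _ hg _ ht ↦ Gamma_commute_of_commute_conj hpo hlo hg ht) hg hgn

/-- Proposition 3: `Γ` is a CSA-group, i.e. every maximal abelian subgroup `Γ₀` of `Γ`
is malnormal: `gΓ₀g⁻¹ ∩ Γ₀ = {1}` for every `g ∈ Γ - Γ₀`. -/
theorem gamma_CSA (p l : ℕ) [Fact p.Prime] [Fact l.Prime]
    (hp2 : p ≠ 2) (hl2 : l ≠ 2) (hpl : p ≠ l)
    (cp dp : ℚ_[p]) (cl dl : ℚ_[l])
    (hcp : cp ^ 2 + dp ^ 2 + 1 = 0) (hcl : cl ^ 2 + dl ^ 2 + 1 = 0)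
    (Γ₀ : Subgroup (PGL2 ℚ_[p] × PGL2 ℚ_[l]))
    (hmax : IsMaxAbelian (Gamma p l cp dp cl dl hcp hcl) Γ₀)
    (g : PGL2 ℚ_[p] × PGL2 ℚ_[l]) (hg : g ∈ Gamma p l cp dp cl dl hcp hcl) (hgn : g ∉ Γ₀) :
    Subgroup.map (MulAut.conj g).toMonoidHom Γ₀ ⊓ Γ₀ = ⊥ :=
  gamma_CSA_general p l hp2 hl2 cp dp cl dl hcp hcl Γ₀ hmax g hg hgn
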